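/- arXiv:2009.13853 — 4 statements merged into one kernel-verified Lean document; each statement's English description precedes it below -/
import Mathlib

section
/- Let γ > 0 and let x_p, x_max, x_min ∈ ℝ^M with x_max ≠ x_min. Write k = k_γ for the Gaussian kernel. If k(x_p, x_max) − k(x_p, x_min) ≥ 1 − k(x_max, x_min), then exp(−γ‖x_p − x_max‖) ≥ 1 − exp(−γ‖x_max − x_min‖) and consequently ‖x_p − x_max‖ ≤ −(1/γ) · log(1 − exp(−γ‖x_max − x_min‖)). In particular, when the removal-optimality inequality holds, x_p must be close to x_max, and the bound tends to 0 as γ‖x_max − x_min‖ → ∞. -/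
/-- The Gaussian kernel `k_γ(x, x') = exp(−γ‖x − x'‖)`. -/
noncomputable def gaussKernel {M : ℕ} (γ : ℝ) (x x' : EuclideanSpace ℝ (Fin M)) : ℝ :=
  Real.exp (-γ * ‖x - x'‖)

/-- If the removal-optimality inequality
`k(x_p, x_max) − k(x_p, x_min) ≥ 1 − k(x_max, x_min)` holds (with `γ > 0` and
`x_max ≠ x_min`), then `exp(−γ‖x_p − x_max‖) ≥ 1 − exp(−γ‖x_max − x_min‖)` and
consequently `‖x_p − x_max‖ ≤ −(1/γ)·log(1 − exp(−γ‖x_max − x_min‖))`,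
i.e., `x_p` must be close to `x_max`. -/
theorem stmt_5 {M : ℕ} (γ : ℝ) (hγ : 0 < γ)
    (x_p x_max x_min : EuclideanSpace ℝ (Fin M)) (hne : x_max ≠ x_min)
    (h : gaussKernel γ x_p x_max - gaussKernel γ x_p x_min ≥
      1 - gaussKernel γ x_max x_min) :
    Real.exp (-γ * ‖x_p - x_max‖) ≥ 1 - Real.exp (-γ * ‖x_max - x_min‖) ∧
    ‖x_p - x_max‖ ≤ -(1 / γ) * Real.log (1 - Real.exp (-γ * ‖x_max - x_min‖)) := by
  have hpos : (0:ℝ) < Real.exp (-γ * ‖x_p - x_min‖) := Real.exp_pos _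
  have h1 : Real.exp (-γ * ‖x_p - x_max‖) ≥ 1 - Real.exp (-γ * ‖x_max - x_min‖) := by
    simp only [gaussKernel] at h
    linarith
  refine ⟨h1, ?_⟩
  have hd : 0 < ‖x_max - x_min‖ := by
    simpa [sub_eq_zero] using norm_pos_iff.mpr (sub_ne_zero.mpr hne)
  have hlt : Real.exp (-γ * ‖x_max - x_min‖) < 1 := by
    apply Real.exp_lt_one_iff.mpr
    nlinarith
  have h0 : 0 < 1 - Real.exp (-γ * ‖x_max - x_min‖) := by linarith
  have hlog : Real.log (1 - Real.exp (-γ * ‖x_max - x_min‖)) ≤ -γ * ‖x_p - x_max‖ := by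
    calc Real.log (1 - Real.exp (-γ * ‖x_max - x_min‖))
        ≤ Real.log (Real.exp (-γ * ‖x_p - x_max‖)) := Real.log_le_log h0 h1
      _ = -γ * ‖x_p - x_max‖ := Real.log_exp _
  have hγ' : γ ≠ 0 := ne_of_gt hγ
  simp only [neg_mul] at hlog h1 ⊢
  set L := Real.log (1 - Real.exp (-(γ * ‖x_max - x_min‖))) with hL
  calc ‖x_p - x_max‖ = (γ * ‖x_p - x_max‖) / γ := by field_simp
    _ ≤ (-L) / γ := by
        apply div_le_div_of_nonneg_right ?_ (le_of_lt hγ)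
        linarith
    _ = -(1 / γ * L) := by ring
end

section
/- Let S be a finite set of points in ℝ^M with at least two elements, let γ ≥ 0, and let x_max ∈ S attain the maximum of d_S over S. Set S' = S \ {x_max}, θ_min = min_{x ∈ S} d_S(x), and ε = max_{x ∈ S'} k_γ(x, x_max). Assume some x_min ∈ S' attains the minimum of d_S over S. Then θ_min − ε ≤ min_{x ∈ S'} d_{S'}(x) ≤ θ_min, i.e., the minimum empirical density changes by at most ε when the maximum-density observation is removed. -/
/-- The empirical density of `x` with respect to a finite set `S`:
`d_S(x) = Σ_{x' ∈ S} k_γ(x, x')`. -/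
noncomputable def empDensity {M : ℕ} (γ : ℝ) (S : Finset (EuclideanSpace ℝ (Fin M)))
    (x : EuclideanSpace ℝ (Fin M)) : ℝ :=
  ∑ x' ∈ S, gaussKernel γ x x'

/-- Removing the maximum-density observation `x_max` from `S` changes the minimum
empirical density by at most `ε = max_{x ∈ S'} k_γ(x, x_max)`:
`θ_min − ε ≤ min_{x ∈ S'} d_{S'}(x) ≤ θ_min`, where `S' = S \ {x_max}` and
`θ_min = min_{x ∈ S} d_S(x)`, assuming some point of `S'` attains the minimum of
`d_S` over `S`. -/
theorem stmt_6 {M : ℕ} [DecidableEq (EuclideanSpace ℝ (Fin M))] (γ : ℝ) (hγ : 0 ≤ γ)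
    (S : Finset (EuclideanSpace ℝ (Fin M))) (hcard : 2 ≤ S.card)
    (hS : S.Nonempty) (x_max : EuclideanSpace ℝ (Fin M)) (hmem : x_max ∈ S)
    (hmax : ∀ x ∈ S, empDensity γ S x ≤ empDensity γ S x_max)
    (hS' : (S.erase x_max).Nonempty)
    (hmin : ∃ x_min ∈ S.erase x_max,
      empDensity γ S x_min = S.inf' hS (empDensity γ S)) :
    S.inf' hS (empDensity γ S)
        - (S.erase x_max).sup' hS' (fun x => gaussKernel γ x x_max) ≤
      (S.erase x_max).inf' hS' (empDensity γ (S.erase x_max)) ∧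
    (S.erase x_max).inf' hS' (empDensity γ (S.erase x_max)) ≤
      S.inf' hS (empDensity γ S) := by
  have key : ∀ x ∈ S.erase x_max,
      empDensity γ (S.erase x_max) x = empDensity γ S x - gaussKernel γ x x_max := by
    intro x hx
    have : empDensity γ S x
        = empDensity γ (S.erase x_max) x + gaussKernel γ x x_max := by
      unfold empDensity
      rw [← Finset.sum_erase_add S _ hmem]
    linarith
  constructor
  · apply Finset.le_inf'
    intro x hx
    rw [key x hx]
    have h1 : S.inf' hS (empDensity γ S) ≤ empDensity γ S x :=
      Finset.inf'_le _ (Finset.mem_of_mem_erase hx)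
    have h2 : gaussKernel γ x x_max
        ≤ (S.erase x_max).sup' hS' (fun x => gaussKernel γ x x_max) :=
      Finset.le_sup' (fun x => gaussKernel γ x x_max) hx
    linarith
  · obtain ⟨xm, hxm, hxe⟩ := hmin
    calc (S.erase x_max).inf' hS' (empDensity γ (S.erase x_max))
        ≤ empDensity γ (S.erase x_max) xm := Finset.inf'_le _ hxm
      _ ≤ empDensity γ S xm := by
          rw [key xm hxm]
          have : 0 < gaussKernel γ xm x_max := Real.exp_pos _
          linarith
      _ = S.inf' hS (empDensity γ S) := hxe
end

section
/- Let x_1, …, x_N be points in ℝ^M with N ≥ 1, and consider the SVDD optimization problem with cost parameter C = 1: minimize R² + Σ_{i=1}^N ξ_i over a ∈ ℝ^M, R ≥ 0 and ξ ∈ ℝ^N, subject to ‖x_i − a‖² ≤ R² + ξ_i and ξ_i ≥ 0 for all i. Then: (1) for any feasible (a, R, ξ), setting R' = √(R² + max_i ξ_i) gives ‖x_i − a‖² ≤ R'² for all i, and R'² ≤ R² + Σ_i ξ_i; and (2) consequently, the infimum of R² + Σ_i ξ_i over all feasible (a, R, ξ) equals the infimum of R² over all (a, R) with ‖x_i − a‖²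 ≤ R² for all i. That is, with C = 1 the SVDD problem degenerates to the hard-margin minimum-enclosing-ball problem, and an optimal solution encloses all training observations, so f^X(x; C = 1) = inlier for every training observation x. -/
/-- With cost parameter `C = 1`, SVDD degenerates to the hard-margin
minimum-enclosing-ball problem: (1) any feasible `(a, R, ξ)` can be turned into a
feasible hard-margin radius `R' = √(R² + max_i ξ_i)` enclosing all observations,
with `R'² ≤ R² + Σ_i ξ_i`; (2) the infimum of the SVDD objective `R² + Σ_i ξ_i`
equals the infimum of `R²` over enclosing balls, so an optimal solution encloses
all training observations. -/
theorem stmt_9 {M N : ℕ} (hN : 1 ≤ N) (x : Fin N → EuclideanSpace ℝ (Fin M)) :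
    (∀ (a : EuclideanSpace ℝ (Fin M)) (R : ℝ) (ξ : Fin N → ℝ),
      0 ≤ R → (∀ i, 0 ≤ ξ i) → (∀ i, ‖x i - a‖ ^ 2 ≤ R ^ 2 + ξ i) →
      (∀ i, ‖x i - a‖ ^ 2 ≤
        (Real.sqrt (R ^ 2 + Finset.univ.sup' ⟨⟨0, hN⟩, Finset.mem_univ _⟩ ξ)) ^ 2) ∧
      (Real.sqrt (R ^ 2 + Finset.univ.sup' ⟨⟨0, hN⟩, Finset.mem_univ _⟩ ξ)) ^ 2 ≤
        R ^ 2 + ∑ i, ξ i) ∧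
    sInf {val : ℝ | ∃ (a : EuclideanSpace ℝ (Fin M)) (R : ℝ) (ξ : Fin N → ℝ),
        0 ≤ R ∧ (∀ i, 0 ≤ ξ i) ∧ (∀ i, ‖x i - a‖ ^ 2 ≤ R ^ 2 + ξ i) ∧
        val = R ^ 2 + ∑ i, ξ i} =
      sInf {val : ℝ | ∃ (a : EuclideanSpace ℝ (Fin M)) (R : ℝ),
        0 ≤ R ∧ (∀ i, ‖x i - a‖ ^ 2 ≤ R ^ 2) ∧ val = R ^ 2} := by
  have key : ∀ (a : EuclideanSpace ℝ (Fin M)) (R : ℝ) (ξ : Fin N → ℝ),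
      0 ≤ R → (∀ i, 0 ≤ ξ i) → (∀ i, ‖x i - a‖ ^ 2 ≤ R ^ 2 + ξ i) →
      (∀ i, ‖x i - a‖ ^ 2 ≤
        (Real.sqrt (R ^ 2 + Finset.univ.sup' ⟨⟨0, hN⟩, Finset.mem_univ _⟩ ξ)) ^ 2) ∧
      (Real.sqrt (R ^ 2 + Finset.univ.sup' ⟨⟨0, hN⟩, Finset.mem_univ _⟩ ξ)) ^ 2 ≤
        R ^ 2 + ∑ i, ξ i := by
    intro a R ξ hR hξ hfeas
    have hsup0 : 0 ≤ Finset.univ.sup' ⟨⟨0, hN⟩, Finset.mem_univ _⟩ ξ :=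
      le_trans (hξ ⟨0, hN⟩) (Finset.le_sup' ξ (Finset.mem_univ _))
    have hpos : 0 ≤ R ^ 2 + Finset.univ.sup' ⟨⟨0, hN⟩, Finset.mem_univ _⟩ ξ := by positivity
    rw [Real.sq_sqrt hpos]
    constructor
    · intro i
      exact le_trans (hfeas i) (by
        gcongr
        exact Finset.le_sup' ξ (Finset.mem_univ i))
    · gcongr
      apply Finset.sup'_le
      intro i _
      exact Finset.single_le_sum (fun j _ => hξ j) (Finset.mem_univ i)
  refine ⟨key, ?_⟩
  set S := {val : ℝ | ∃ (a : EuclideanSpace ℝ (Fin M)) (R : ℝ) (ξ : Fin N → ℝ),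
        0 ≤ R ∧ (∀ i, 0 ≤ ξ i) ∧ (∀ i, ‖x i - a‖ ^ 2 ≤ R ^ 2 + ξ i) ∧
        val = R ^ 2 + ∑ i, ξ i} with hS
  set H := {val : ℝ | ∃ (a : EuclideanSpace ℝ (Fin M)) (R : ℝ),
        0 ≤ R ∧ (∀ i, ‖x i - a‖ ^ 2 ≤ R ^ 2) ∧ val = R ^ 2} with hH
  have hSbdd : BddBelow S := by
    refine ⟨0, fun v hv => ?_⟩
    obtain ⟨a, R, ξ, hR, hξ, _, rfl⟩ := hv
    have : 0 ≤ ∑ i, ξ i := Finset.sum_nonneg fun i _ => hξ i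
    positivity
  have hHbdd : BddBelow H := by
    refine ⟨0, fun v hv => ?_⟩
    obtain ⟨a, R, hR, _, rfl⟩ := hv
    positivity
  have hSsub : H ⊆ S := by
    intro v hv
    obtain ⟨a, R, hR, hf, rfl⟩ := hv
    exact ⟨a, R, fun _ => 0, hR, fun i => le_refl 0,
      fun i => by simpa using hf i, by simp⟩
  have hHne : H.Nonempty := by
    have hfeas0 : ∀ i, ‖x i - (0 : EuclideanSpace ℝ (Fin M))‖ ^ 2 ≤
        (0:ℝ) ^ 2 + (fun i => ‖x i - 0‖ ^ 2) i := by
      intro i; simp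
    obtain ⟨h1, _⟩ := key 0 0 (fun i => ‖x i - 0‖ ^ 2) le_rfl (fun i => by positivity) hfeas0
    exact ⟨_, 0, Real.sqrt _, Real.sqrt_nonneg _, h1, rfl⟩
  have hSne : S.Nonempty := hHne.mono hSsub
  apply le_antisymm
  · exact csInf_le_csInf hSbdd hHne hSsub
  · apply le_csInf hSne
    intro v hv
    obtain ⟨a, R, ξ, hR, hξ, hfeas, rfl⟩ := hv
    obtain ⟨h1, h2⟩ := key a R ξ hR hξ hfeas
    exact le_trans (csInf_le hHbdd ⟨a, _, Real.sqrt_nonneg _, h1, rfl⟩) h2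
end

section
/- Let S be a finite set of points in ℝ^M with at least two elements, let γ ≥ 0 and δ > 0, and let x_max ∈ S attain the maximum of d_S over S. Set S' = S \ {x_max} and ε = max_{x ∈ S'} k_γ(x, x_max), and assume some point of S' attains the minimum of d_S over S. Then every x ∈ S' with d_S(x) < min_{x' ∈ S} d_S(x') + δ (a boundary point of S of width δ) satisfies d_{S'}(x) < min_{x' ∈ S'} d_{S'}(x') + δ + ε (it is a boundary point of S' of width δ + ε). That is, removing the maximum-density observation preserves the set of boundary points up to a tolerance of ε in the density threshold. -/
/-- Removing the maximum-density observation `x_max` from `S` preserves the set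
of boundary points up to a tolerance of `ε = max_{x ∈ S'} k_γ(x, x_max)`: every
boundary point of `S` of width `δ` contained in `S' = S \ {x_max}` is a boundary
point of `S'` of width `δ + ε`, assuming some point of `S'` attains the minimum
of `d_S` over `S`. -/
theorem stmt_11 {M : ℕ} [DecidableEq (EuclideanSpace ℝ (Fin M))] (γ : ℝ) (hγ : 0 ≤ γ)
    (δ : ℝ) (hδ : 0 < δ)
    (S : Finset (EuclideanSpace ℝ (Fin M))) (hcard : 2 ≤ S.card)
    (hS : S.Nonempty) (x_max : EuclideanSpace ℝ (Fin M)) (hmem : x_max ∈ S)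
    (hmax : ∀ x ∈ S, empDensity γ S x ≤ empDensity γ S x_max)
    (hS' : (S.erase x_max).Nonempty)
    (hmin : ∃ x_min ∈ S.erase x_max,
      empDensity γ S x_min = S.inf' hS (empDensity γ S)) :
    ∀ x ∈ S.erase x_max,
      empDensity γ S x < S.inf' hS (empDensity γ S) + δ →
      empDensity γ (S.erase x_max) x <
        (S.erase x_max).inf' hS' (empDensity γ (S.erase x_max)) +
          (δ + (S.erase x_max).sup' hS' (fun y => gaussKernel γ y x_max)) := by
  intro x hx hlt
  obtain ⟨y, hy, hyeq⟩ := (S.erase x_max).exists_mem_eq_inf' hS' (empDensity γ (S.erase x_max))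
  have herase : ∀ z, empDensity γ (S.erase x_max) z
      = empDensity γ S z - gaussKernel γ z x_max := fun z =>
    Finset.sum_erase_eq_sub (f := fun x' => gaussKernel γ z x') hmem
  have hk : gaussKernel γ y x_max ≤
      (S.erase x_max).sup' hS' (fun y => gaussKernel γ y x_max) :=
    Finset.le_sup' (fun y => gaussKernel γ y x_max) hy
  have hkx : 0 ≤ gaussKernel γ x x_max := (Real.exp_pos _).le
  have hyS : y ∈ S := Finset.mem_of_mem_erase hy
  have hminle : S.inf' hS (empDensity γ S) ≤ empDensity γ S y :=
    Finset.inf'_le _ hyS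
  rw [herase, hyeq, herase]
  linarith
end
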